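/- Let C be the set of candidates in an election and suppose C = I ∪ J is a partition of C such that (i) x ≥_{3/4} y for all x ∈ I and y ∈ J, and (ii) 0 < |I| ≤ (|J| + 4)/2. Then in every 3-wise median of the election, every candidate of I is ranked before every candidate of J. -/

import Mathlib

/-!
Suppose a 3-wise median `π` ranks an outsider `y ∉ I` above some `x ∈ I`, and let `σ` be `π`
with `I` moved to the front, the order inside `I` and inside `J = Iᶜ` being kept. A set `S`
changes its top only if its new top `x` is in `I` and its old top is an outsider ranked above
`x`; with `|S| ≤ 3` and `n = |V|`, it is then `{x, y}`, `{x, y, z}` with `z ∈ I` behind `x`,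
or `{x, y, y'}` with `y' ∉ I`, and the move gains at least `n/2`, loses at most `n/4`, and gains
at least `n/4` on it, respectively. If `k` outsiders are ahead of `x`, there are `k` sets of the
first kind, at most `k (|I| - 1)` of the second and at least `k (|J| - 1) / 2` of the third, so
`2 |I| ≤ |J| + 4` makes the total gain positive, contradicting the minimality of `π`.
-/

open Finset

/-- A ranking (strict total order) of the finite candidate set `C`, encoded as a
bijection with `Fin (Fintype.card C)`; position `0` is the top of the ranking. -/
abbrev Ranking (C : Type*) [Fintype C] := C ≃ Fin (Fintype.card C)

section Defs

variable {C : Type*} [Fintype C] [DecidableEq C]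

/-- `x` is ranked (strictly) before `y` in the ranking `π`. -/
def Before (π : Ranking C) (x y : C) : Prop := π x < π y

instance (π : Ranking C) (x y : C) : Decidable (Before π x y) :=
  inferInstanceAs (Decidable (π x < π y))

instance : DecidableEq (Ranking C) := fun a b =>
  decidable_of_iff (∀ i, a i = b i) Equiv.ext_iff.symm

/-- The top-ranked element of `S ⊆ C` according to `π` (`⊤` if `S = ∅`). -/
def topS (π : Ranking C) (S : Finset C) : WithTop C :=
  (S.image π).min.map (fun i => π.symm i)

/-- The `k`-wise Kendall-tau distance between two rankings: the number of subsets
`S ⊆ C` with `|S| ≤ k` on whose top element the two rankings disagree (subsets of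
size at most one never contribute). -/
def kDist (k : ℕ) (π σ : Ranking C) : ℕ :=
  ((Finset.univ : Finset C).powerset.filter
    (fun S => S.card ≤ k ∧ topS π S ≠ topS σ S)).card

/-- The `k`-wise Kendall-tau distance from a ranking to a voting profile. -/
def kDistV (k : ℕ) (π : Ranking C) (V : Multiset (Ranking C)) : ℕ :=
  (V.map (fun σ => kDist k π σ)).sum

/-- `π` is a `k`-wise median (for `k = 2`: a Kemeny ranking) of the profile `V`. -/
def IsKMedian (k : ℕ) (V : Multiset (Ranking C)) (π : Ranking C) : Prop :=
  ∀ σ : Ranking C, kDistV k π V ≤ kDistV k σ V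

/-- The number of votes of `V` in which `x` is ranked before `y`. -/
def votesBefore (V : Multiset (Ranking C)) (x y : C) : ℕ :=
  Multiset.card (V.filter (fun v => Before v x y))

/-- `x ≥ₛ y` : `x` is ranked before `y` in at least `s·|V|` of the votes. -/
def AtLeastRatio (V : Multiset (Ranking C)) (s : ℝ) (x y : C) : Prop :=
  s * (Multiset.card V : ℝ) ≤ (votesBefore V x y : ℝ)

/-- `x >ₛ y` : `x` is ranked before `y` in more than `s·|V|` of the votes. -/
def MoreThanRatio (V : Multiset (Ranking C)) (s : ℝ) (x y : C) : Prop :=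
  s * (Multiset.card V : ℝ) < (votesBefore V x y : ℝ)

noncomputable instance (V : Multiset (Ranking C)) (s : ℝ) (x y : C) :
    Decidable (AtLeastRatio V s x y) :=
  inferInstanceAs (Decidable (s * (Multiset.card V : ℝ) ≤ (votesBefore V x y : ℝ)))

/-- `x` is a non-dirty candidate w.r.t. threshold `s`. -/
def NonDirty (V : Multiset (Ranking C)) (s : ℝ) (x : C) : Prop :=
  ∀ y : C, y ≠ x → AtLeastRatio V s x y ∨ AtLeastRatio V s y x

/-- `x` is ranked first (is the winner) in the ranking `π`. -/
def RankedFirst (π : Ranking C) (x : C) : Prop :=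
  ∀ y : C, y ≠ x → Before π x y

instance (π : Ranking C) (x : C) : Decidable (RankedFirst π x) :=
  inferInstanceAs (Decidable (∀ y : C, y ≠ x → Before π x y))

end Defs

lemma Nat.mul_add_two_mul_choose_two_le (a k : ℕ) :
    k * (a + k) + 2 * a.choose 2 ≤ 2 * (a + k).choose 2 + k := by
  induction k with
  | zero => simp
  | succ k ih =>
    rw [← add_assoc, Nat.choose_succ_succ', Nat.choose_one_right]
    nlinarith [ih]

lemma Finset.card_mul_card_le_two_mul_card_sdiff_powersetCard_two {α : Type*} [DecidableEq α]
    {J K : Finset α} (hK : K ⊆ J) :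
    #K * #J ≤ 2 * #(J.powersetCard 2 \ (J \ K).powersetCard 2) + #K := by
  have hsub : (J \ K).powersetCard 2 ⊆ J.powersetCard 2 := powersetCard_mono sdiff_subset
  have hJ : #J = #(J \ K) + #K := (card_sdiff_add_card_eq_card hK).symm
  have hle := Nat.choose_le_choose 2 (card_le_card (sdiff_subset (s := J) (t := K)))
  rw [card_sdiff_of_subset hsub, card_powersetCard, card_powersetCard]
  have := Nat.mul_add_two_mul_choose_two_le #(J \ K) #K
  rw [← hJ] at this
  omega

lemma Finset.eq_pair_or_eq_triple {α : Type*} [DecidableEq α] {S : Finset α} {x y : α}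
    (hx : x ∈ S) (hy : y ∈ S) (hxy : x ≠ y) (hS : #S ≤ 3) :
    S = {x, y} ∨ ∃ z, z ≠ x ∧ z ≠ y ∧ S = {x, y, z} := by
  set R := (S.erase x).erase y with hR
  have hRcard : #R ≤ 1 := by
    rw [hR, card_erase_of_mem (mem_erase.2 ⟨hxy.symm, hy⟩), card_erase_of_mem hx]
    omega
  have hSR : S = insert x (insert y R) := by
    rw [hR, insert_erase (mem_erase.2 ⟨hxy.symm, hy⟩), insert_erase hx]
  rcases R.eq_empty_or_nonempty with hR0 | ⟨z, hz⟩
  · left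
    rw [hSR, hR0, insert_empty]
  · right
    obtain ⟨hzy, hz'⟩ := mem_erase.1 hz
    refine ⟨z, (mem_erase.1 hz').1, hzy, ?_⟩
    rw [hSR, eq_singleton_iff_unique_mem.2 ⟨hz, fun w hw => card_le_one.1 hRcard w hw z hz⟩]

lemma Multiset.card_filter_exists_le_sum {α β : Type*} [DecidableEq β] (V : Multiset α)
    (T : Finset β) (p : β → α → Prop) [∀ b, DecidablePred (p b)] :
    card (V.filter fun a => ∃ b ∈ T, p b a) ≤ ∑ b ∈ T, card (V.filter (p b)) := by
  induction T using Finset.induction_on with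
  | empty => simp
  | insert b T hb ih =>
    rw [sum_insert hb]
    calc card (V.filter fun a => ∃ c ∈ insert b T, p c a)
        = card (V.filter fun a => p b a ∨ ∃ c ∈ T, p c a) := by
          simp only [mem_insert, exists_eq_or_imp]
      _ ≤ card (V.filter (p b)) + card (V.filter fun a => ∃ c ∈ T, p c a) := by
          rw [← card_add, filter_add_filter, card_add]
          exact Nat.le_add_right _ _
      _ ≤ _ := by gcongr

section Ranking

variable {C : Type*} [Fintype C]

lemma exists_ranking_lt_iff {α : Type*} [LinearOrder α] (f : C → α)
    (hf : Function.Injective f) : ∃ σ : Ranking C, ∀ a b, σ a < σ b ↔ f a < f b := by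
  let _ : LinearOrder C := LinearOrder.lift' f hf
  exact ⟨(Fintype.orderIsoFinOfCardEq C rfl).symm.toEquiv,
    fun a b => (Fintype.orderIsoFinOfCardEq C rfl).symm.lt_iff_lt⟩

lemma not_before_iff (π : Ranking C) {a b : C} (hab : a ≠ b) :
    ¬ Before π a b ↔ Before π b a :=
  ⟨fun h => (lt_or_gt_of_ne (π.injective.ne hab)).resolve_left h, fun h => lt_asymm h⟩

lemma votesBefore_add_votesBefore (V : Multiset (Ranking C)) {x y : C} (hxy : x ≠ y) :
    votesBefore V x y + votesBefore V y x = Multiset.card V := by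
  rw [votesBefore, votesBefore,
    Multiset.filter_congr fun v _ => (not_before_iff v hxy).symm, ← Multiset.card_add,
    Multiset.filter_add_not]

lemma topS_eq_coe_iff {π : Ranking C} {S : Finset C} {z : C} :
    topS π S = z ↔ z ∈ S ∧ ∀ w ∈ S, π z ≤ π w := by
  have hmin : (S.image π).min = π z ↔ z ∈ S ∧ ∀ w ∈ S, π z ≤ π w := by
    constructor
    · intro h
      obtain ⟨w, hw, hwz⟩ := mem_image.1 (mem_of_min h)
      exact ⟨π.injective hwz ▸ hw, fun u hu => min_le_of_eq (mem_image_of_mem π hu) h⟩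
    · rintro ⟨hz, hle⟩
      refine le_antisymm (min_le (mem_image_of_mem π hz)) (Finset.le_min fun b hb => ?_)
      obtain ⟨w, hw, rfl⟩ := mem_image.1 hb
      exact WithTop.coe_le_coe.2 (hle w hw)
  rw [← hmin, topS]
  constructor
  · intro h
    obtain ⟨i, hi, hiz⟩ := Option.map_eq_some_iff.1 h
    rw [hi, ← hiz, Equiv.apply_symm_apply]
    rfl
  · intro h
    rw [h]
    simp

lemma topS_empty (π : Ranking C) : topS π ∅ = ⊤ := by
  simp [topS]

lemma exists_topS_eq_coe (π : Ranking C) {S : Finset C} (hS : S.Nonempty) :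
    ∃ t : C, topS π S = t := by
  obtain ⟨t, ht, hmin⟩ := S.exists_min_image π hS
  exact ⟨t, topS_eq_coe_iff.2 ⟨ht, hmin⟩⟩

lemma topS_eq_coe_of_before {π : Ranking C} {S : Finset C} {z : C} (hz : z ∈ S)
    (h : ∀ w ∈ S, w ≠ z → Before π z w) : topS π S = z := by
  refine topS_eq_coe_iff.2 ⟨hz, fun w hw => ?_⟩
  rcases eq_or_ne w z with rfl | hwz
  · exact le_rfl
  · exact (h w hw hwz).le

def MovesToFront (I : Finset C) (π σ : Ranking C) : Prop :=
  ∀ a b, σ a < σ b ↔ a ∈ I ∧ b ∉ I ∨ (a ∈ I ↔ b ∈ I) ∧ π a < π b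

lemma exists_movesToFront (I : Finset C) (π : Ranking C) : ∃ σ, MovesToFront I π σ := by
  classical
  obtain ⟨σ, hσ⟩ := exists_ranking_lt_iff (fun a => toLex (decide (a ∉ I), π a))
    fun a b h => π.injective (Prod.ext_iff.1 (toLex.injective h)).2
  refine ⟨σ, fun a b => ?_⟩
  rw [hσ, Prod.Lex.toLex_lt_toLex]
  by_cases ha : a ∈ I <;> by_cases hb : b ∈ I <;> simp [ha, hb]

namespace MovesToFront

variable {I : Finset C} {π σ : Ranking C}

lemma lt_of_mem_of_notMem (hσ : MovesToFront I π σ) {a b : C} (ha : a ∈ I) (hb : b ∉ I) :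
    σ a < σ b :=
  (hσ a b).2 (Or.inl ⟨ha, hb⟩)

lemma lt_iff_of_mem (hσ : MovesToFront I π σ) {a b : C} (ha : a ∈ I) (hb : b ∈ I) :
    σ a < σ b ↔ π a < π b := by
  simp [hσ a b, ha, hb]

lemma mem_and_notMem_of_topS_ne (hσ : MovesToFront I π σ) {S : Finset C} {x t : C}
    (hx : topS σ S = x) (ht : topS π S = t) (htx : t ≠ x) :
    x ∈ I ∧ t ∉ I ∧ π t < π x := by
  obtain ⟨hxS, hσx⟩ := topS_eq_coe_iff.1 hx
  obtain ⟨htS, hπt⟩ := topS_eq_coe_iff.1 ht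
  have hπ : π t < π x := (hπt x hxS).lt_of_ne (π.injective.ne htx)
  have hσ' : σ x < σ t := (hσx t htS).lt_of_ne (σ.injective.ne htx.symm)
  rcases (hσ x t).1 hσ' with h | h
  · exact ⟨h.1, h.2, hπ⟩
  · exact absurd h.2 (lt_asymm hπ)

lemma topS_eq (hσ : MovesToFront I π σ) {S : Finset C} {x : C} (hx : x ∈ I) (hxS : x ∈ S)
    (h : ∀ w ∈ S, w ≠ x → w ∈ I → π x < π w) : topS σ S = x := by
  refine topS_eq_coe_of_before hxS fun w hw hwx => ?_
  by_cases hwI : w ∈ I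
  · exact (hσ.lt_iff_of_mem hx hwI).2 (h w hw hwx hwI)
  · exact hσ.lt_of_mem_of_notMem hx hwI

end MovesToFront

def ThreeQuartersAhead (V : Multiset (Ranking C)) (I : Finset C) : Prop :=
  ∀ x ∈ I, ∀ y ∉ I, 3 * Multiset.card V ≤ 4 * votesBefore V x y

lemma ThreeQuartersAhead.four_mul_votesBefore_le {V : Multiset (Ranking C)} {I : Finset C}
    (hmaj : ThreeQuartersAhead V I) {x y : C} (hx : x ∈ I) (hy : y ∉ I) :
    4 * votesBefore V y x ≤ Multiset.card V := by
  have := votesBefore_add_votesBefore V (ne_of_mem_of_not_mem hx hy)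
  have := hmaj x hx y hy
  omega

def insidersBehind (π : Ranking C) (I : Finset C) (x : C) : Finset C :=
  I.filter fun z => π x < π z

lemma mem_insidersBehind {π : Ranking C} {I : Finset C} {x z : C} :
    z ∈ insidersBehind π I x ↔ z ∈ I ∧ π x < π z := by
  simp [insidersBehind]

end Ranking

section Disagreements

variable {C : Type*} [Fintype C] [DecidableEq C]

def topDisagreements (V : Multiset (Ranking C)) (π : Ranking C) (S : Finset C) : ℕ :=
  Multiset.card (V.filter fun v => topS π S ≠ topS v S)

lemma kDist_eq_sum (k : ℕ) (π σ : Ranking C) :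
    kDist k π σ =
      ∑ S ∈ univ.powerset.filter (#· ≤ k), if topS π S ≠ topS σ S then 1 else 0 := by
  rw [kDist, ← filter_filter, card_filter]

lemma kDistV_eq_sum (k : ℕ) (π : Ranking C) (V : Multiset (Ranking C)) :
    kDistV k π V = ∑ S ∈ univ.powerset.filter (#· ≤ k), topDisagreements V π S := by
  induction V using Multiset.induction_on with
  | empty => simp [kDistV, topDisagreements]
  | cons v V ih =>
    have hcons : ∀ S, topDisagreements (v ::ₘ V) π S =
        (if topS π S ≠ topS v S then 1 else 0) + topDisagreements V π S := by
      intro S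
      rw [topDisagreements, Multiset.filter_cons]
      split_ifs <;> simp [topDisagreements, add_comm]
    rw [kDistV, Multiset.map_cons, Multiset.sum_cons, ← kDistV, ih, kDist_eq_sum,
      ← sum_add_distrib]
    exact sum_congr rfl fun S _ => (hcons S).symm

lemma topDisagreements_le_card (V : Multiset (Ranking C)) (π : Ranking C) (S : Finset C) :
    topDisagreements V π S ≤ Multiset.card V :=
  Multiset.card_le_card (Multiset.filter_le _ V)

lemma votesBefore_le_topDisagreements (V : Multiset (Ranking C)) {π : Ranking C}
    {S : Finset C} {t x : C} (ht : topS π S = t) (hx : x ∈ S) :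
    votesBefore V x t ≤ topDisagreements V π S := by
  refine Multiset.card_le_card (Multiset.monotone_filter_right V fun v hv htv => ?_)
  rw [ht] at htv
  exact not_le.2 hv ((topS_eq_coe_iff.1 htv.symm).2 x hx)

lemma topDisagreements_le_sum_votesBefore (V : Multiset (Ranking C)) {σ : Ranking C}
    {S : Finset C} {x : C} (hx : topS σ S = x) :
    topDisagreements V σ S ≤ ∑ w ∈ S.erase x, votesBefore V w x := by
  refine le_trans (Multiset.card_le_card (Multiset.monotone_filter_right V fun v hv => ?_))
    (Multiset.card_filter_exists_le_sum V (S.erase x) fun w v => Before v w x)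
  have hxS := (topS_eq_coe_iff.1 hx).1
  by_contra! h
  refine hv (hx.trans (topS_eq_coe_of_before hxS fun w hw hwx => ?_).symm)
  exact (not_before_iff v hwx).1 (h w (mem_erase.2 ⟨hwx, hw⟩))

end Disagreements

section FlippedSets

variable {C : Type*} [Fintype C] [DecidableEq C] {V : Multiset (Ranking C)} {I : Finset C}
  {π σ : Ranking C}

lemma MovesToFront.topS_insert_eq (hσ : MovesToFront I π σ) {T : Finset C} {x : C}
    (hx : x ∈ I) (hT : T ⊆ Iᶜ) : topS σ (insert x T) = x := by
  refine hσ.topS_eq hx (mem_insert_self x T) fun w hw hwx hwI => ?_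
  exact absurd hwI (mem_compl.1 (hT ((mem_insert.1 hw).resolve_left hwx)))

lemma MovesToFront.topS_triple_eq (hσ : MovesToFront I π σ) {x y z : C} (hx : x ∈ I)
    (hy : y ∉ I) (hxz : π x < π z) : topS σ {x, y, z} = x := by
  refine hσ.topS_eq hx (mem_insert_self _ _) fun w hw hwx hwI => ?_
  simp only [mem_insert, mem_singleton] at hw
  rcases hw with rfl | rfl | rfl
  exacts [absurd rfl hwx, absurd hwI hy, hxz]

namespace ThreeQuartersAhead

lemma four_mul_topDisagreements_le (hmaj : ThreeQuartersAhead V I) {S : Finset C} {x : C}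
    (hx : x ∈ I) (hS : topS σ S = x) (hout : ∀ w ∈ S.erase x, w ∉ I) :
    4 * topDisagreements V σ S ≤ #(S.erase x) * Multiset.card V :=
  calc 4 * topDisagreements V σ S ≤ 4 * ∑ w ∈ S.erase x, votesBefore V w x :=
        Nat.mul_le_mul_left 4 (topDisagreements_le_sum_votesBefore V hS)
    _ = ∑ w ∈ S.erase x, 4 * votesBefore V w x := mul_sum _ _ _
    _ ≤ ∑ _w ∈ S.erase x, Multiset.card V :=
        sum_le_sum fun w hw => hmaj.four_mul_votesBefore_le hx (hout w hw)
    _ = #(S.erase x) * Multiset.card V := by rw [sum_const, smul_eq_mul]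

lemma three_mul_card_le_four_mul_topDisagreements (hmaj : ThreeQuartersAhead V I)
    (hσ : MovesToFront I π σ) {S : Finset C} {x y : C} (hS : topS σ S = x) (hy : y ∈ S)
    (hyx : π y < π x) : 3 * Multiset.card V ≤ 4 * topDisagreements V π S := by
  obtain ⟨t, ht⟩ := exists_topS_eq_coe π ⟨y, hy⟩
  have htx : t ≠ x := by
    rintro rfl
    exact absurd ((topS_eq_coe_iff.1 ht).2 y hy) (not_le.2 hyx)
  obtain ⟨hx, htI, -⟩ := hσ.mem_and_notMem_of_topS_ne hS ht htx
  have := votesBefore_le_topDisagreements V ht (topS_eq_coe_iff.1 hS).1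
  have := hmaj x hx t htI
  omega

lemma four_mul_topDisagreements_insert_add_le (hmaj : ThreeQuartersAhead V I)
    (hσ : MovesToFront I π σ) {T : Finset C} {x y : C} (hx : x ∈ I) (hT : T ⊆ Iᶜ)
    (hy : y ∈ T) (hyx : π y < π x) :
    4 * topDisagreements V σ (insert x T) + 3 * Multiset.card V ≤
      4 * topDisagreements V π (insert x T) + #T * Multiset.card V := by
  have hxT : x ∉ T := fun h => mem_compl.1 (hT h) hx
  have htop := hσ.topS_insert_eq hx hT
  have hσle := hmaj.four_mul_topDisagreements_le hx htop (by
    rw [erase_insert hxT]; exact fun w hw => mem_compl.1 (hT hw))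
  rw [erase_insert hxT] at hσle
  have := hmaj.three_mul_card_le_four_mul_topDisagreements hσ htop (mem_insert_of_mem hy) hyx
  omega

lemma four_mul_topDisagreements_triple_le (hmaj : ThreeQuartersAhead V I)
    (hσ : MovesToFront I π σ) {x y z : C} (hx : x ∈ I) (hy : y ∉ I) (hyx : π y < π x)
    (hxz : π x < π z) :
    4 * topDisagreements V σ {x, y, z} ≤
      4 * topDisagreements V π {x, y, z} + Multiset.card V := by
  have := topDisagreements_le_card V σ {x, y, z}
  have := hmaj.three_mul_card_le_four_mul_topDisagreements hσ (hσ.topS_triple_eq hx hy hxz)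
    (by simp : y ∈ ({x, y, z} : Finset C)) hyx
  omega

end ThreeQuartersAhead

def outsidersAhead (π : Ranking C) (I : Finset C) (x : C) : Finset C :=
  Iᶜ.filter fun y => π y < π x

def outsiderPairsAhead (π : Ranking C) (I : Finset C) (x : C) : Finset (Finset C) :=
  Iᶜ.powersetCard 2 \ (Iᶜ \ outsidersAhead π I x).powersetCard 2

def flippedPairs (π : Ranking C) (I : Finset C) (x : C) : Finset (Finset C) :=
  (outsidersAhead π I x).image fun y => {x, y}

def flippedMixedTriples (π : Ranking C) (I : Finset C) (x : C) : Finset (Finset C) :=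
  (outsidersAhead π I x ×ˢ insidersBehind π I x).image fun p => {x, p.1, p.2}

def flippedOutsiderTriples (π : Ranking C) (I : Finset C) (x : C) : Finset (Finset C) :=
  (outsiderPairsAhead π I x).image (insert x)

/-- When `σ` moves `I` to the front of `π`, these are the sets `S` with `#S ≤ 3` whose top
changes, sorted by their new top `x` (see `exists_mem_flippedSets`). -/
def flippedSets (π : Ranking C) (I : Finset C) (x : C) : Finset (Finset C) :=
  flippedPairs π I x ∪ flippedMixedTriples π I x ∪ flippedOutsiderTriples π I x

lemma mem_outsidersAhead {x y : C} : y ∈ outsidersAhead π I x ↔ y ∉ I ∧ π y < π x := by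
  simp [outsidersAhead]

lemma mem_outsiderPairsAhead {x : C} {T : Finset C} :
    T ∈ outsiderPairsAhead π I x ↔ T ⊆ Iᶜ ∧ #T = 2 ∧ ∃ y ∈ T, π y < π x := by
  simp only [outsiderPairsAhead, mem_sdiff, mem_powersetCard]
  constructor
  · rintro ⟨⟨hT, h2⟩, h⟩
    obtain ⟨y, hy, hyA⟩ := not_subset.1 fun hsub => h ⟨hsub, h2⟩
    have hyA' : y ∈ outsidersAhead π I x := by
      by_contra h'
      exact hyA (mem_sdiff.2 ⟨hT hy, h'⟩)
    exact ⟨hT, h2, y, hy, (mem_outsidersAhead.1 hyA').2⟩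
  · rintro ⟨hT, h2, y, hy, hyx⟩
    exact ⟨⟨hT, h2⟩, fun ⟨hsub, _⟩ =>
      (mem_sdiff.1 (hsub hy)).2 (mem_outsidersAhead.2 ⟨mem_compl.1 (hT hy), hyx⟩)⟩

lemma exists_mem_flippedSets (hσ : MovesToFront I π σ) {S : Finset C} (hS : #S ≤ 3)
    (h : topS π S ≠ topS σ S) : ∃ x ∈ I, S ∈ flippedSets π I x := by
  have hne : S.Nonempty := nonempty_iff_ne_empty.2 (by rintro rfl; simp [topS_empty] at h)
  obtain ⟨x, hx⟩ := exists_topS_eq_coe σ hne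
  obtain ⟨t, ht⟩ := exists_topS_eq_coe π hne
  have htx : t ≠ x := by rintro rfl; exact h (ht.trans hx.symm)
  obtain ⟨hxI, htI, htx'⟩ := hσ.mem_and_notMem_of_topS_ne hx ht htx
  have htA : t ∈ outsidersAhead π I x := mem_outsidersAhead.2 ⟨htI, htx'⟩
  obtain ⟨hxS, hσx⟩ := topS_eq_coe_iff.1 hx
  refine ⟨x, hxI, ?_⟩
  rcases eq_pair_or_eq_triple hxS (topS_eq_coe_iff.1 ht).1 htx.symm hS with
    rfl | ⟨z, hzx, hzt, rfl⟩
  · exact mem_union_left _ (mem_union_left _ (mem_image_of_mem _ htA))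
  by_cases hzI : z ∈ I
  · have hxz : π x < π z := (hσ.lt_iff_of_mem hxI hzI).1
      ((hσx z (by simp)).lt_of_ne (σ.injective.ne hzx.symm))
    refine mem_union_left _ (mem_union_right _ (mem_image.2 ⟨(t, z), ?_, rfl⟩))
    exact mem_product.2 ⟨htA, mem_insidersBehind.2 ⟨hzI, hxz⟩⟩
  · refine mem_union_right _
      (mem_image.2 ⟨{t, z}, mem_outsiderPairsAhead.2 ⟨?_, ?_, ?_⟩, rfl⟩)
    · simp [insert_subset_iff, htI, hzI]
    · exact card_pair hzt.symm
    · exact ⟨t, mem_insert_self _ _, htx'⟩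

lemma topS_eq_of_mem_flippedSets (hσ : MovesToFront I π σ) {S : Finset C} {x : C}
    (hx : x ∈ I) (hS : S ∈ flippedSets π I x) : topS σ S = x := by
  simp only [flippedSets, flippedPairs, flippedMixedTriples, flippedOutsiderTriples, mem_union,
    mem_image, mem_product, Prod.exists] at hS
  rcases hS with (⟨y, hy, rfl⟩ | ⟨y, z, ⟨hy, hz⟩, rfl⟩) | ⟨T, hT, rfl⟩
  · exact hσ.topS_insert_eq hx (by simpa using (mem_outsidersAhead.1 hy).1)
  · exact hσ.topS_triple_eq hx (mem_outsidersAhead.1 hy).1 (mem_insidersBehind.1 hz).2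
  · exact hσ.topS_insert_eq hx (mem_outsiderPairsAhead.1 hT).1

lemma card_le_three_of_mem_flippedSets {S : Finset C} {x : C} (hS : S ∈ flippedSets π I x) :
    #S ≤ 3 := by
  simp only [flippedSets, flippedPairs, flippedMixedTriples, flippedOutsiderTriples, mem_union,
    mem_image, mem_product, Prod.exists] at hS
  rcases hS with (⟨y, -, rfl⟩ | ⟨y, z, -, rfl⟩) | ⟨T, hT, rfl⟩
  · exact card_le_two.trans (by norm_num)
  · exact card_le_three
  · exact (card_insert_le x T).trans (by rw [(mem_outsiderPairsAhead.1 hT).2.1])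

lemma disjoint_flippedPairs_flippedMixedTriples {x : C} :
    Disjoint (flippedPairs π I x) (flippedMixedTriples π I x) := by
  simp only [flippedPairs, flippedMixedTriples, disjoint_left, mem_image, mem_product,
    Prod.exists, not_exists, not_and]
  rintro _ ⟨y, hy, rfl⟩ y' z ⟨-, hz⟩ h
  obtain ⟨hzI, hxz⟩ := mem_insidersBehind.1 hz
  have hzS : z ∈ ({x, y} : Finset C) := h ▸ by simp
  simp only [mem_insert, mem_singleton] at hzS
  rcases hzS with rfl | rfl
  exacts [lt_irrefl _ hxz, (mem_outsidersAhead.1 hy).1 hzI]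

lemma disjoint_flippedOutsiderTriples {x : C} (hx : x ∈ I) :
    Disjoint (flippedPairs π I x ∪ flippedMixedTriples π I x)
      (flippedOutsiderTriples π I x) := by
  simp only [flippedPairs, flippedMixedTriples, flippedOutsiderTriples, disjoint_left, mem_union,
    mem_image, mem_product, Prod.exists, not_exists, not_and]
  rintro _ (⟨y, -, rfl⟩ | ⟨y, z, ⟨-, hz⟩, rfl⟩) T hT h
  · have := card_insert_of_notMem fun h => mem_compl.1 ((mem_outsiderPairsAhead.1 hT).1 h) hx
    rw [h, (mem_outsiderPairsAhead.1 hT).2.1] at this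
    have := card_le_two (a := x) (b := y)
    omega
  · obtain ⟨hzI, hxz⟩ := mem_insidersBehind.1 hz
    rcases mem_insert.1 (h ▸ by simp : z ∈ insert x T) with rfl | hzT
    exacts [lt_irrefl _ hxz, mem_compl.1 ((mem_outsiderPairsAhead.1 hT).1 hzT) hzI]

lemma sum_flippedSets {M : Type*} [AddCommMonoid M] (f : Finset C → M) {x : C} (hx : x ∈ I) :
    ∑ S ∈ flippedSets π I x, f S =
      ∑ y ∈ outsidersAhead π I x, f {x, y} +
        ∑ p ∈ outsidersAhead π I x ×ˢ insidersBehind π I x, f {x, p.1, p.2} +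
        ∑ T ∈ outsiderPairsAhead π I x, f (insert x T) := by
  have hout : ∀ {y}, y ∈ outsidersAhead π I x → y ∉ I := fun hy =>
    (mem_outsidersAhead.1 hy).1
  rw [flippedSets, sum_union (disjoint_flippedOutsiderTriples hx),
    sum_union disjoint_flippedPairs_flippedMixedTriples, flippedPairs, flippedMixedTriples,
    flippedOutsiderTriples, sum_image, sum_image, sum_image]
  · intro T₁ hT₁ T₂ hT₂ h
    have hxT : ∀ {T}, T ∈ outsiderPairsAhead π I x → x ∉ T := fun hT h =>
      mem_compl.1 ((mem_outsiderPairsAhead.1 hT).1 h) hx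
    rw [← erase_insert (hxT hT₁), ← erase_insert (hxT hT₂), h]
  · rintro ⟨y₁, z₁⟩ hp₁ ⟨y₂, z₂⟩ hp₂ h
    obtain ⟨hy₁, hz₁⟩ := mem_product.1 hp₁
    obtain ⟨hy₂, hz₂⟩ := mem_product.1 hp₂
    obtain ⟨hz₁I, hxz₁⟩ := mem_insidersBehind.1 hz₁
    have h' : ({x, y₁, z₁} : Finset C) = {x, y₂, z₂} := h
    have hy : y₁ ∈ ({x, y₂, z₂} : Finset C) := by rw [← h']; simp
    have hz : z₁ ∈ ({x, y₂, z₂} : Finset C) := by rw [← h']; simp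
    simp only [mem_insert, mem_singleton] at hy hz
    refine Prod.ext ?_ ?_
    · rcases hy with rfl | rfl | rfl
      exacts [absurd hx (hout hy₁), rfl, absurd (mem_insidersBehind.1 hz₂).1 (hout hy₁)]
    · rcases hz with rfl | rfl | rfl
      exacts [absurd hxz₁ (lt_irrefl _), absurd hz₁I (hout hy₂), rfl]
  · intro y₁ hy₁ y₂ _ h
    have hy : y₁ ∈ ({x, y₂} : Finset C) := by
      rw [← show ({x, y₁} : Finset C) = {x, y₂} from h]; simp
    rcases mem_insert.1 hy with rfl | hy
    exacts [absurd hx (hout hy₁), mem_singleton.1 hy]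

lemma two_mul_card_product_add_le (hI : 2 * #I ≤ #Iᶜ + 4) {x : C} (hx : x ∈ I) :
    2 * (#(outsidersAhead π I x) * #(insidersBehind π I x)) + #(outsidersAhead π I x) ≤
      4 * #(outsidersAhead π I x) + 2 * #(outsiderPairsAhead π I x) := by
  have hB : #(insidersBehind π I x) + 1 ≤ #I := by
    rw [← card_erase_add_one hx]
    refine Nat.add_le_add_right (card_le_card fun z hz => mem_erase.2 ⟨?_, ?_⟩) 1
    · rintro rfl; exact lt_irrefl _ (mem_insidersBehind.1 hz).2
    · exact (mem_insidersBehind.1 hz).1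
  have hP := card_mul_card_le_two_mul_card_sdiff_powersetCard_two
    (filter_subset (fun y => π y < π x) Iᶜ)
  have := Nat.mul_le_mul_left #(outsidersAhead π I x)
    (by omega : 2 * #(insidersBehind π I x) ≤ #Iᶜ + 2)
  simp only [outsiderPairsAhead, outsidersAhead] at *
  nlinarith

end FlippedSets

section Gain

variable {C : Type*} [Fintype C] [DecidableEq C] {V : Multiset (Ranking C)} {I : Finset C}
  {π σ : Ranking C}

namespace ThreeQuartersAhead

lemma eight_mul_sum_flippedSets_add_le (hmaj : ThreeQuartersAhead V I)
    (hσ : MovesToFront I π σ) (hI : 2 * #I ≤ #Iᶜ + 4) {x : C} (hx : x ∈ I) :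
    8 * ∑ S ∈ flippedSets π I x, topDisagreements V σ S +
        Multiset.card V * #(outsidersAhead π I x) ≤
      8 * ∑ S ∈ flippedSets π I x, topDisagreements V π S := by
  have hpairs := sum_le_sum fun y (hy : y ∈ outsidersAhead π I x) =>
    hmaj.four_mul_topDisagreements_insert_add_le hσ (T := {y}) hx
      (by simpa using (mem_outsidersAhead.1 hy).1) (mem_singleton_self y)
      (mem_outsidersAhead.1 hy).2
  have hmixed := sum_le_sum fun p (hp : p ∈ outsidersAhead π I x ×ˢ insidersBehind π I x) =>
    hmaj.four_mul_topDisagreements_triple_le hσ hx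
      (mem_outsidersAhead.1 (mem_product.1 hp).1).1
      (mem_outsidersAhead.1 (mem_product.1 hp).1).2 (mem_insidersBehind.1 (mem_product.1 hp).2).2
  have houts := sum_le_sum fun T (hT : T ∈ outsiderPairsAhead π I x) =>
    have ⟨hTI, hT2, y, hy, hyx⟩ := mem_outsiderPairsAhead.1 hT
    hT2 ▸ hmaj.four_mul_topDisagreements_insert_add_le hσ hx hTI hy hyx
  simp only [sum_add_distrib, ← mul_sum, sum_const, smul_eq_mul, card_singleton,
    card_product] at hpairs hmixed houts
  have hcount :=
    Nat.mul_le_mul_left (Multiset.card V) (two_mul_card_product_add_le (π := π) hI hx)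
  rw [sum_flippedSets _ hx, sum_flippedSets _ hx]
  nlinarith

lemma sum_topDisagreements_lt (hmaj : ThreeQuartersAhead V I) (hV : V ≠ 0)
    (hσ : MovesToFront I π σ) (hI : 2 * #I ≤ #Iᶜ + 4) {x y : C} (hx : x ∈ I) (hy : y ∉ I)
    (hyx : π y < π x) :
    ∑ S ∈ univ.powerset.filter (#· ≤ 3), topDisagreements V σ S <
      ∑ S ∈ univ.powerset.filter (#· ≤ 3), topDisagreements V π S := by
  have hU : I.biUnion (flippedSets π I) ⊆ univ.powerset.filter (#· ≤ 3) :=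
    biUnion_subset.2 fun x _ S hS =>
      mem_filter.2 ⟨mem_powerset.2 (subset_univ S), card_le_three_of_mem_flippedSets hS⟩
  have hrest : ∀ S ∈ univ.powerset.filter (#· ≤ 3) \ I.biUnion (flippedSets π I),
      topDisagreements V σ S = topDisagreements V π S := by
    intro S hS
    obtain ⟨hS3, hSU⟩ := mem_sdiff.1 hS
    have htop : topS π S = topS σ S := by
      by_contra h
      obtain ⟨x, hx, hxS⟩ := exists_mem_flippedSets hσ (mem_filter.1 hS3).2 h
      exact hSU (mem_biUnion.2 ⟨x, hx, hxS⟩)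
    simp only [topDisagreements, htop]
  have hdisj : (I : Set C).PairwiseDisjoint (flippedSets π I) :=
    fun x₁ hx₁ x₂ hx₂ hne => disjoint_left.2 fun S h₁ h₂ => hne <| WithTop.coe_injective <|
      (topS_eq_of_mem_flippedSets hσ hx₁ h₁).symm.trans
        (topS_eq_of_mem_flippedSets hσ hx₂ h₂)
  have hgain := sum_le_sum fun x (hx : x ∈ I) =>
    hmaj.eight_mul_sum_flippedSets_add_le hσ hI hx
  rw [sum_add_distrib, ← mul_sum, ← mul_sum, ← mul_sum] at hgain
  have hpos : 0 < Multiset.card V * ∑ x ∈ I, #(outsidersAhead π I x) :=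
    Nat.mul_pos (Multiset.card_pos.2 hV) <|
      (card_pos.2 ⟨y, mem_outsidersAhead.2 ⟨hy, hyx⟩⟩).trans_le <|
        single_le_sum (f := fun x => #(outsidersAhead π I x)) (fun _ _ => Nat.zero_le _) hx
  have hflipped : ∑ S ∈ I.biUnion (flippedSets π I), topDisagreements V σ S <
      ∑ S ∈ I.biUnion (flippedSets π I), topDisagreements V π S := by
    rw [sum_biUnion hdisj, sum_biUnion hdisj]
    omega
  rw [← sum_sdiff hU, ← sum_sdiff hU (f := topDisagreements V π), sum_congr rfl hrest]
  exact Nat.add_lt_add_left hflipped _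

end ThreeQuartersAhead

end Gain

theorem stmt10_general {C : Type*} [Fintype C] [DecidableEq C]
    (V : Multiset (Ranking C)) (hV : V ≠ 0)
    (I J : Finset C) (hdisj : Disjoint I J) (hunion : I ∪ J = Finset.univ)
    (hmaj : ∀ x ∈ I, ∀ y ∈ J, AtLeastRatio V (3 / 4) x y)
    (hIJ : (I.card : ℝ) ≤ ((J.card : ℝ) + 4) / 2) :
    ∀ π : Ranking C, IsKMedian 3 V π → ∀ x ∈ I, ∀ y ∈ J, Before π x y := by
  intro π hmed x hx y hy
  by_contra hxy
  obtain rfl : J = Iᶜ :=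
    (IsCompl.compl_eq ⟨hdisj, codisjoint_iff.2 (by simpa using hunion)⟩).symm
  have hmaj' : ThreeQuartersAhead V I := fun a ha b hb => by
    have := hmaj a ha b (mem_compl.2 hb)
    rw [AtLeastRatio] at this
    exact_mod_cast (by linarith : (3 * Multiset.card V : ℝ) ≤ 4 * votesBefore V a b)
  have hI : 2 * #I ≤ #Iᶜ + 4 := by exact_mod_cast (by linarith : (2 * #I : ℝ) ≤ #Iᶜ + 4)
  obtain ⟨σ, hσ⟩ := exists_movesToFront I π
  have hyx : π y < π x := (not_before_iff π (ne_of_mem_of_not_mem hx (mem_compl.1 hy))).1 hxy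
  refine absurd (hmed σ) (not_le.2 ?_)
  rw [kDistV_eq_sum, kDistV_eq_sum]
  exact hmaj'.sum_topDisagreements_lt hV hσ hI hx (mem_compl.1 hy) hyx

/-- $3/4$-Extended Condorcet criterion for the 3-wise Kemeny rule: if
`C = I ∪ J` is a partition with `x ≥_{3/4} y` for all `x ∈ I`, `y ∈ J` and
`0 < |I| ≤ (|J|+4)/2`, then in every 3-wise median every candidate of `I` is ranked
before every candidate of `J`. -/
theorem stmt10 {C : Type*} [Fintype C] [DecidableEq C]
    (V : Multiset (Ranking C)) (hV : V ≠ 0)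
    (I J : Finset C) (hdisj : Disjoint I J) (hunion : I ∪ J = Finset.univ)
    (hmaj : ∀ x ∈ I, ∀ y ∈ J, AtLeastRatio V (3 / 4) x y)
    (hI0 : 0 < I.card) (hIJ : (I.card : ℝ) ≤ ((J.card : ℝ) + 4) / 2) :
    ∀ π : Ranking C, IsKMedian 3 V π → ∀ x ∈ I, ∀ y ∈ J, Before π x y :=
  stmt10_general V hV I J hdisj hunion hmaj hIJ
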